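/- Let A be a simplicial ℓ-arrangement in ℝ^ℓ, K a chamber with basis B^K = {α_1,…,α_ℓ}, and i ≠ j. Then c^K_{ij} = c^K_{ji} = 0 if and only if |A_{α_i^⊥ ∩ α_j^⊥}| = 2. Furthermore, if |A_{α_i^⊥ ∩ α_j^⊥}| = 3 then c^K_{ji} = 1/c^K_{ij}; in particular, if c^K_{ij} = −1 then c^K_{ji} = −1. -/

import Mathlib

open scoped Classical

noncomputable section

section Alg

variable {K : Type*} [Field K] {V : Type*} [AddCommGroup V] [Module K V]

/-- `H` is a linear hyperplane of `V`, i.e. the kernel of a nonzero linear functional. -/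
def IsLinHyperplane (H : Submodule K V) : Prop :=
  ∃ f : V →ₗ[K] K, f ≠ 0 ∧ H = LinearMap.ker f

/-- The intersection lattice `L(A)` of an arrangement `A`:
all intersections of subsets of `A` (the empty intersection being `⊤ = V`). -/
def interLat (A : Finset (Submodule K V)) : Finset (Submodule K V) :=
  A.powerset.image fun S => S.inf id

/-- The localization `A_X = {H ∈ A | X ⊆ H}`. -/
def locArr (A : Finset (Submodule K V)) (X : Submodule K V) : Finset (Submodule K V) :=
  A.filter fun H => X ≤ H

/-- The restriction `A^X = {X ∩ H | H ∈ A, X ⊄ H}`, as an arrangement in `X`. -/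
def resArr (A : Finset (Submodule K V)) (X : Submodule K V) : Finset (Submodule K ↥X) :=
  (A.filter fun H => ¬ X ≤ H).image fun H => H.comap X.subtype

/-- The quotient arrangement `A_X / X = {H/X | H ∈ A, X ⊆ H}` in `V ⧸ X`. -/
def quotArr (A : Finset (Submodule K V)) (X : Submodule K V) : Finset (Submodule K (V ⧸ X)) :=
  (A.filter fun H => X ≤ H).image fun H => H.map X.mkQ

/-- `X` is a modular element of the intersection lattice of `A`. -/
def IsModularFlat (A : Finset (Submodule K V)) (X : Submodule K V) : Prop :=
  X ∈ interLat A ∧ ∀ Y ∈ interLat A, X ⊔ Y ∈ interLat A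

/-- `A` is supersolvable: its intersection lattice contains a maximal chain
`V = X_0 > X_1 > … > X_ℓ` of modular elements (`X_i` of codimension `i`). -/
def IsSupersolvableArr (A : Finset (Submodule K V)) : Prop :=
  ∃ c : ℕ → Submodule K V,
    (∀ i ≤ Module.finrank K V, IsModularFlat A (c i)) ∧
    (∀ i ≤ Module.finrank K V, Module.finrank K (V ⧸ c i) = i) ∧
    ∀ i < Module.finrank K V, c (i + 1) < c i

/-- `A` is reducible: it decomposes as a product along a nontrivial
direct sum decomposition `V = V₁ ⊕ V₂` (each hyperplane contains `V₁` or `V₂`). -/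
def IsReducibleArr (A : Finset (Submodule K V)) : Prop :=
  ∃ V₁ V₂ : Submodule K V, V₁ ≠ ⊥ ∧ V₂ ≠ ⊥ ∧ IsCompl V₁ V₂ ∧
    ∀ H ∈ A, V₁ ≤ H ∨ V₂ ≤ H

/-- `A` and `B` are linearly isomorphic arrangements in `V`. -/
def LinIsoArr (A B : Finset (Submodule K V)) : Prop :=
  ∃ φ : V ≃ₗ[K] V, B = A.image fun H => H.map (φ : V →ₗ[K] V)

/-- `A` and `B` are lattice equivalent: their intersection lattices are isomorphic
as posets (equivalently, as lattices). -/
def LatEquivArr {V₂ : Type*} [AddCommGroup V₂] [Module K V₂]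
    (A : Finset (Submodule K V)) (B : Finset (Submodule K V₂)) : Prop :=
  ∃ e : {X // X ∈ interLat A} ≃ {Y // Y ∈ interLat B},
    ∀ X Y : {X // X ∈ interLat A},
      (X : Submodule K V) ≤ (Y : Submodule K V) ↔
        (e X : Submodule K V₂) ≤ (e Y : Submodule K V₂)

/-- The product of the arrangements `A` in `V` and `B` in `V₂`, in `V × V₂`. -/
def prodArr {V₂ : Type*} [AddCommGroup V₂] [Module K V₂]
    (A : Finset (Submodule K V)) (B : Finset (Submodule K V₂)) :
    Finset (Submodule K (V × V₂)) :=
  A.image (fun H => H.prod (⊤ : Submodule K V₂)) ∪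
    B.image fun H => (⊤ : Submodule K V).prod H

end Alg

section Moebius

variable {K : Type*} [Field K] {V : Type*} [AddCommGroup V] [Module K V]
  [FiniteDimensional K V]

/-- The Möbius function of the intersection lattice of `A`:
`μ(V) = 1` and `μ(X) = - ∑_{Y ⊋ X, Y ∈ L(A)} μ(Y)` for `X ≠ V`. -/
def arrMoebius [FiniteDimensional K V] (A : Finset (Submodule K V)) (X : Submodule K V) : ℤ :=
  if X = ⊤ then 1
  else - ∑ Y ∈ ((interLat A).filter fun Y => X < Y).attach, arrMoebius A Y.1
termination_by Module.finrank K V - Module.finrank K ↥X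
decreasing_by
  have hY := (Finset.mem_filter.mp Y.2).2
  have h1 : Module.finrank K ↥X < Module.finrank K ↥(Y.1) :=
    Submodule.finrank_lt_finrank_of_lt hY
  have h2 : Module.finrank K ↥(Y.1) ≤ Module.finrank K V := Submodule.finrank_le _
  omega

/-- The characteristic polynomial `χ_A(t) = ∑_{X ∈ L(A)} μ(X) t^{dim X}`,
evaluated at the integer `t`. -/
def charPolyAt (A : Finset (Submodule K V)) (t : ℤ) : ℤ :=
  ∑ X ∈ interLat A, arrMoebius A X * t ^ Module.finrank K ↥X

/-- The invariant `s(A) = ℓ⋅|χ_A(-1)| - 2 ∑_{H ∈ A} |χ_{A^H}(-1)|`. -/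
def sInvariant (A : Finset (Submodule K V)) : ℤ :=
  (Module.finrank K V : ℤ) * |charPolyAt A (-1)| -
    2 * ∑ H ∈ A, |charPolyAt (resArr A H) (-1)|

end Moebius

section Top

variable {V : Type*} [AddCommGroup V] [Module ℝ V]

/-- `C` is an open simplicial cone: the set of strictly positive linear
combinations of some basis of `V`. -/
def IsOpenSimplicialCone (C : Set V) : Prop :=
  ∃ b : Module.Basis (Fin (Module.finrank ℝ V)) ℝ V,
    C = {v | ∃ c : Fin (Module.finrank ℝ V) → ℝ, (∀ i, 0 < c i) ∧ v = ∑ i, c i • b i}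

variable [TopologicalSpace V]

/-- `C` is a chamber of `A`: a connected component of the complement of the
union of the hyperplanes of `A`. -/
def IsChamberOf (A : Finset (Submodule ℝ V)) (C : Set V) : Prop :=
  ∃ x ∈ (⋃ H ∈ A, (H : Set V))ᶜ, C = connectedComponentIn ((⋃ H ∈ A, (H : Set V))ᶜ) x

/-- `A` is a simplicial arrangement: every chamber is an open simplicial cone. -/
def IsSimplicialArr (A : Finset (Submodule ℝ V)) : Prop :=
  ∀ C : Set V, IsChamberOf A C → IsOpenSimplicialCone C

/-- `H` is a wall of the chamber `C`: a hyperplane of `A` meeting the closure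
of `C` in a set of dimension `dim V - 1`. -/
def IsWallOf (A : Finset (Submodule ℝ V)) (C : Set V) (H : Submodule ℝ V) : Prop :=
  H ∈ A ∧
    Module.finrank ℝ ↥(Submodule.span ℝ ((H : Set V) ∩ closure C)) + 1 = Module.finrank ℝ V

/-- `α` is a basis for the chamber `C`: a family of linear forms, one vanishing on
each wall of `C`, with `C = ⋂ᵢ {αᵢ > 0}`. -/
def IsChamberBasis {ℓ : ℕ} (A : Finset (Submodule ℝ V)) (C : Set V)
    (α : Fin ℓ → (V →ₗ[ℝ] ℝ)) : Prop :=
  (∀ i, IsWallOf A C (LinearMap.ker (α i))) ∧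
  (∀ H, IsWallOf A C H → ∃ i, H = LinearMap.ker (α i)) ∧
  (Function.Injective fun i => LinearMap.ker (α i)) ∧
  C = ⋂ i, {v | 0 < α i v}

/-- `C'` is the chamber adjacent to `C` across the wall `H`:
the common wall is `H = ⟨closure C ∩ closure C'⟩`. -/
def IsAdjChamber (A : Finset (Submodule ℝ V)) (C C' : Set V) (H : Submodule ℝ V) : Prop :=
  IsChamberOf A C' ∧ C' ≠ C ∧ Submodule.span ℝ (closure C ∩ closure C') = H

/-- The Coxeter graph of a chamber with basis `α`: vertices `1, …, ℓ`, with an edge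
`{i, j}` whenever `|A_{αᵢ^⊥ ∩ αⱼ^⊥}| ≥ 3`. -/
def coxGraph {ℓ : ℕ} (A : Finset (Submodule ℝ V)) (α : Fin ℓ → (V →ₗ[ℝ] ℝ)) :
    SimpleGraph (Fin ℓ) :=
  SimpleGraph.fromRel fun i j =>
    3 ≤ (locArr A (LinearMap.ker (α i) ⊓ LinearMap.ker (α j))).card

end Top

section Concrete

/-- The `i`-th coordinate functional on `ℝ^ℓ`. -/
def coordFn (ℓ : ℕ) (i : Fin ℓ) : (Fin ℓ → ℝ) →ₗ[ℝ] ℝ := LinearMap.proj i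

/-- The essential braid arrangement `A(A_ℓ)` in `ℝ^ℓ`:
`{ker(xᵢ - xⱼ) | i < j} ∪ {ker xᵢ}` (the braid arrangement of `ℝ^{ℓ+1}` made essential). -/
def braidArr (ℓ : ℕ) : Finset (Submodule ℝ (Fin ℓ → ℝ)) :=
  ((Finset.univ : Finset (Fin ℓ × Fin ℓ)).filter fun p => p.1 < p.2).image
      (fun p => LinearMap.ker (coordFn ℓ p.1 - coordFn ℓ p.2)) ∪
    (Finset.univ : Finset (Fin ℓ)).image fun i => LinearMap.ker (coordFn ℓ i)

/-- The reflection arrangement `A(C_ℓ)` in `ℝ^ℓ`: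
`{ker(xᵢ - xⱼ), ker(xᵢ + xⱼ) | i < j} ∪ {ker xᵢ}`. -/
def typeCArr (ℓ : ℕ) : Finset (Submodule ℝ (Fin ℓ → ℝ)) :=
  ((Finset.univ : Finset (Fin ℓ × Fin ℓ)).filter fun p => p.1 < p.2).image
      (fun p => LinearMap.ker (coordFn ℓ p.1 - coordFn ℓ p.2)) ∪
  ((Finset.univ : Finset (Fin ℓ × Fin ℓ)).filter fun p => p.1 < p.2).image
      (fun p => LinearMap.ker (coordFn ℓ p.1 + coordFn ℓ p.2)) ∪
    (Finset.univ : Finset (Fin ℓ)).image fun i => LinearMap.ker (coordFn ℓ i)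

/-- The linear functional on `ℝ³` with coefficient vector `(a, b, c)`. -/
def fn3 (a b c : ℝ) : (Fin 3 → ℝ) →ₗ[ℝ] ℝ :=
  a • coordFn 3 0 + b • coordFn 3 1 + c • coordFn 3 2

/-- The arrangement `A(2n, 1)` in `ℝ³`, with normal vectors
`(-sin(πk/n), cos(πk/n), 0)` for `k = 0, …, n-1` and
`(cos(π(2j+1)/n), sin(π(2j+1)/n), 1)` for `j = 0, …, n-1`. -/
def A2n1Arr (n : ℕ) : Finset (Submodule ℝ (Fin 3 → ℝ)) :=
  (Finset.range n).image (fun k =>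
      LinearMap.ker (fn3 (-Real.sin (Real.pi * (k : ℝ) / (n : ℝ)))
        (Real.cos (Real.pi * (k : ℝ) / (n : ℝ))) 0)) ∪
    (Finset.range n).image fun j =>
      LinearMap.ker (fn3 (Real.cos (Real.pi * (2 * (j : ℝ) + 1) / (n : ℝ)))
        (Real.sin (Real.pi * (2 * (j : ℝ) + 1) / (n : ℝ))) 1)

/-- The arrangement `A(4m+1, 1) = A(4m, 1) ∪ {(0,0,1)^⊥}` in `ℝ³`. -/
def A4m1Arr (m : ℕ) : Finset (Submodule ℝ (Fin 3 → ℝ)) :=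
  insert (LinearMap.ker (fn3 0 0 1)) (A2n1Arr (2 * m))

end Concrete

end

/-!
Let `X = ker αᵢ ∩ ker αⱼ`. The walls `ker (αⱼ - c_{ij} αᵢ)` of `Kᵢ` and `ker (αᵢ - c_{ji} αⱼ)`
of `Kⱼ` both lie in `A_X`, and they equal `ker αⱼ`, resp. `ker αᵢ`, exactly when the coefficient
vanishes. The key point is that a third hyperplane `H = ker β ∈ A_X` forces `c_{ij} ≠ 0`.
Normalize `β > 0` on `K` and write `β = a αᵢ + b αⱼ`; since `ker αⱼ` is a wall of `K`, `a > 0`.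
As `H` does not separate `K` from `Kᵢ` while `ker αᵢ` does, `β ≥ 0` and `αᵢ ≤ 0` on the closure
of `Kᵢ`, so `αᵢ = 0` on `ker αⱼ ∩ closure Kᵢ`; this face then cannot span `ker αⱼ`, i.e.
`ker αⱼ` is not a wall of `Kᵢ`. Hence `|A_X| = 2` iff both coefficients vanish, and if
`|A_X| = 3` both walls are the third hyperplane, whose two descriptions give `c_{ij} c_{ji} = 1`.
-/

open LinearMap

theorem Finset.eq_of_mem_sdiff_pair_of_card_eq_three {ι : Type*} [DecidableEq ι]
    {s : Finset ι} (hs : s.card = 3) {a b x y : ι} (hab : a ≠ b) (habs : {a, b} ⊆ s)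
    (hx : x ∈ s \ {a, b}) (hy : y ∈ s \ {a, b}) : x = y := by
  have hcard : (s \ {a, b}).card = 1 := by
    rw [Finset.card_sdiff_of_subset habs, hs, Finset.card_pair hab]
  exact Finset.card_le_one.mp hcard.le x hx y hy

section LinearForms

variable {K V : Type*} [Field K] [AddCommGroup V] [Module K V] {f g : Module.Dual K V}

theorem IsLinHyperplane.ne_top {H : Submodule K V} (hH : IsLinHyperplane H) : H ≠ ⊤ := by
  obtain ⟨f, hf, rfl⟩ := hH
  rwa [Ne, ker_eq_top]

theorem exists_smul_eq_of_ker_le (h : ker f ≤ ker g) : ∃ c : K, c • f = g := by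
  have := mem_span_of_iInf_ker_le_ker (L := fun _ : Unit => f) (K := g) (by simpa using h)
  simpa [Set.range_const, Submodule.mem_span_singleton] using this

theorem exists_smul_add_smul_eq_of_inf_ker_le {β : Module.Dual K V}
    (h : ker f ⊓ ker g ≤ ker β) : ∃ a b : K, a • f + b • g = β := by
  have := mem_span_of_iInf_ker_le_ker (L := ![f, g]) (K := β)
    ((le_inf (iInf_le _ 0) (iInf_le _ 1)).trans h)
  rwa [Matrix.range_cons_cons_empty, Submodule.mem_span_pair] at this

theorem inf_ker_le_ker_sub_smul {c : K} : ker f ⊓ ker g ≤ ker (g - c • f) := by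
  rintro v ⟨hf, hg⟩
  simp_all

theorem ker_eq_of_ker_le (hg : g ≠ 0) (h : ker f ≤ ker g) : ker f = ker g := by
  obtain ⟨c, rfl⟩ := exists_smul_eq_of_ker_le h
  exact (ker_smul f c (left_ne_zero_of_smul hg)).symm

theorem linearIndependent_pair_of_ker_ne (hf : f ≠ 0) (hg : g ≠ 0) (h : ker f ≠ ker g) :
    LinearIndependent K ![f, g] := by
  rw [LinearIndependent.pair_iff' hf]
  rintro a rfl
  exact h (ker_smul f a (left_ne_zero_of_smul hg)).symm

theorem mul_eq_mul_of_ker_le (hfg : LinearIndependent K ![f, g]) {u v : Module.Dual K V}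
    {a b a' b' : K} (hu : a • f + b • g = u) (hv : a' • f + b' • g = v)
    (h : ker u ≤ ker v) : a * b' = b * a' := by
  obtain ⟨e, rfl⟩ := exists_smul_eq_of_ker_le h
  obtain ⟨ha, hb⟩ := LinearIndependent.pair_iff.mp hfg (e * a - a') (e * b - b')
    (by rw [← hu] at hv; linear_combination (norm := module) -hv)
  linear_combination b * ha - a * hb

theorem eq_zero_of_ker_sub_smul_eq_or (hfg : LinearIndependent K ![f, g]) {c : K}
    (h : ker (g - c • f) = ker f ∨ ker (g - c • f) = ker g) : c = 0 := by
  have hu : (-c) • f + (1 : K) • g = g - c • f := by module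
  rcases h with h | h
  · have := mul_eq_mul_of_ker_le hfg hu (a' := 1) (b' := 0) (by module) h.le
    simp at this
  · have := mul_eq_mul_of_ker_le hfg hu (a' := 0) (b' := 1) (by module) h.le
    simpa using this

theorem mul_eq_one_of_ker_sub_smul_eq (hfg : LinearIndependent K ![f, g]) {c d : K}
    (h : ker (g - c • f) = ker (f - d • g)) : c * d = 1 := by
  have := mul_eq_mul_of_ker_le hfg (a := -c) (b := 1) (a' := 1) (b' := -d)
    (by module) (by module) h.le
  linear_combination this

end LinearForms

section Chambers

variable {V : Type*} [AddCommGroup V] [Module ℝ V] [TopologicalSpace V]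
  {A : Finset (Submodule ℝ V)} {C C' : Set V}

namespace IsChamberOf

theorem isPreconnected (hC : IsChamberOf A C) : IsPreconnected C := by
  obtain ⟨x, -, rfl⟩ := hC
  exact isPreconnected_connectedComponentIn

theorem nonempty (hC : IsChamberOf A C) : C.Nonempty := by
  obtain ⟨x, hx, rfl⟩ := hC
  exact ⟨x, mem_connectedComponentIn hx⟩

theorem notMem_of_mem (hC : IsChamberOf A C) {v : V} (hv : v ∈ C) {H : Submodule ℝ V}
    (hH : H ∈ A) : v ∉ H := by
  obtain ⟨x, -, rfl⟩ := hC
  have := connectedComponentIn_subset _ x hv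
  simp only [Set.mem_compl_iff, Set.mem_iUnion, not_exists] at this
  exact this H hH

theorem eq_of_subset (hC : IsChamberOf A C) (hC' : IsChamberOf A C') (h : C' ⊆ C) :
    C' = C := by
  obtain ⟨x, hx, rfl⟩ := hC'
  obtain ⟨y, -, rfl⟩ := hC
  exact (connectedComponentIn_eq (h (mem_connectedComponentIn hx))).symm

end IsChamberOf

theorem IsChamberBasis.apply_pos {ℓ : ℕ} {α : Fin ℓ → V →ₗ[ℝ] ℝ} (hα : IsChamberBasis A C α)
    {v : V} (hv : v ∈ C) (k : Fin ℓ) : 0 < α k v := by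
  rw [hα.2.2.2] at hv
  exact Set.mem_iInter.mp hv k

theorem IsChamberBasis.ne_zero {ℓ : ℕ} {α : Fin ℓ → V →ₗ[ℝ] ℝ} (hα : IsChamberBasis A C α)
    (hhyp : ∀ H ∈ A, IsLinHyperplane H) (k : Fin ℓ) : α k ≠ 0 := fun h =>
  (hhyp _ (hα.1 k).1).ne_top (by rw [h, ker_zero])

end Chambers

section ChamberSigns

variable {V : Type*} [NormedAddCommGroup V] [NormedSpace ℝ V] [FiniteDimensional ℝ V]
  {A : Finset (Submodule ℝ V)} {C C' : Set V}

theorem LinearMap.nonneg_of_mem_closure {s : Set V} {f : V →ₗ[ℝ] ℝ} (hf : ∀ v ∈ s, 0 < f v)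
    {v : V} (hv : v ∈ closure s) : 0 ≤ f v :=
  closure_minimal (fun u hu => (hf u hu).le)
    (isClosed_le continuous_const f.continuous_of_finiteDimensional) hv

namespace IsChamberOf

theorem pos_of_pos (hC : IsChamberOf A C) {β : V →ₗ[ℝ] ℝ} (hβ : ker β ∈ A) {p : V}
    (hp : p ∈ C) (hβp : 0 < β p) : ∀ v ∈ C, 0 < β v := by
  intro v hv
  by_contra! hβv
  obtain ⟨q, hq, hβq⟩ := hC.isPreconnected.intermediate_value hv hp
    β.continuous_of_finiteDimensional.continuousOn ⟨hβv, hβp.le⟩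
  exact hC.notMem_of_mem hq hβ hβq

theorem exists_ker_eq_pos (hC : IsChamberOf A C) {f : V →ₗ[ℝ] ℝ} (hf : ker f ∈ A) :
    ∃ β : V →ₗ[ℝ] ℝ, ker β = ker f ∧ ∀ v ∈ C, 0 < β v := by
  obtain ⟨x, hx⟩ := hC.nonempty
  rcases Ne.lt_or_gt (hC.notMem_of_mem hx hf : f x ≠ 0) with h | h
  · exact ⟨-f, ker_neg f, hC.pos_of_pos (by rwa [ker_neg]) hx (by simpa using h)⟩
  · exact ⟨f, rfl, hC.pos_of_pos hf hx h⟩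

theorem pos_of_pos_of_not_span_le (hC' : IsChamberOf A C') {β : V →ₗ[ℝ] ℝ} (hβA : ker β ∈ A)
    (hβC : ∀ v ∈ C, 0 < β v) (hspan : ¬ Submodule.span ℝ (closure C ∩ closure C') ≤ ker β) :
    ∀ v ∈ C', 0 < β v := by
  obtain ⟨w, ⟨hwC, hwC'⟩, hβw⟩ := Set.not_subset.mp (mt Submodule.span_le.mpr hspan)
  have hβw : 0 < β w := (β.nonneg_of_mem_closure hβC hwC).lt_of_ne' hβw
  obtain ⟨p, hpβ, hp⟩ := mem_closure_iff.mp hwC' {v | 0 < β v}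
    (isOpen_lt continuous_const β.continuous_of_finiteDimensional) hβw
  exact hC'.pos_of_pos hβA hp hpβ

end IsChamberOf

theorem IsWallOf.span_inter_closure_eq {f : V →ₗ[ℝ] ℝ} (hW : IsWallOf A C (ker f))
    (hf : f ≠ 0) : Submodule.span ℝ ((ker f : Set V) ∩ closure C) = ker f := by
  refine Submodule.eq_of_le_of_finrank_eq (Submodule.span_le.mpr Set.inter_subset_left) ?_
  have := Module.Dual.finrank_ker_add_one_of_ne_zero hf
  have := hW.2
  omega

variable {ℓ : ℕ} {α : Fin ℓ → V →ₗ[ℝ] ℝ}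

theorem IsAdjChamber.apply_neg (hC : IsChamberOf A C) (hα : IsChamberBasis A C α)
    (hα0 : ∀ k, α k ≠ 0) {i : Fin ℓ} (hC' : IsAdjChamber A C C' (ker (α i))) :
    ∀ v ∈ C', α i v < 0 := by
  obtain ⟨hC'ch, hne, hspan⟩ := hC'
  -- otherwise no wall of `C` separates `C'` from `C`, so `C' ⊆ C`
  by_contra! h
  obtain ⟨v, hv, hαv⟩ := h
  have hpos : ∀ k, ∀ u ∈ C', 0 < α k u := by
    intro k
    by_cases hki : k = i
    · subst hki
      exact hC'ch.pos_of_pos (hα.1 k).1 hv (hαv.lt_of_ne' (hC'ch.notMem_of_mem hv (hα.1 k).1))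
    · refine hC'ch.pos_of_pos_of_not_span_le (hα.1 k).1 (fun u hu => hα.apply_pos hu k) ?_
      rw [hspan]
      exact fun hle => hki (hα.2.2.1 (ker_eq_of_ker_le (hα0 k) hle).symm)
  refine hne (hC.eq_of_subset hC'ch fun u hu => ?_)
  rw [hα.2.2.2]
  exact Set.mem_iInter.mpr fun k => hpos k u hu

theorem IsChamberBasis.pos_of_smul_add_smul_eq (hα : IsChamberBasis A C α) {i j : Fin ℓ}
    (hj : α j ≠ 0) {β : V →ₗ[ℝ] ℝ} (hβC : ∀ v ∈ C, 0 < β v) (hβ0 : β ≠ 0) {a b : ℝ}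
    (hab : a • α i + b • α j = β) (hβj : ker β ≠ ker (α j)) : 0 < a := by
  by_contra! ha
  refine hβj (ker_eq_of_ker_le hβ0 ?_).symm
  rw [← (hα.1 j).span_inter_closure_eq hj, Submodule.span_le]
  rintro v ⟨hvj, hv⟩
  have hβv := β.nonneg_of_mem_closure hβC hv
  have hαv := (α i).nonneg_of_mem_closure (fun u hu => hα.apply_pos hu i) hv
  rw [← hab] at hβv ⊢
  simp only [SetLike.mem_coe, mem_ker, LinearMap.add_apply, LinearMap.smul_apply, smul_eq_mul]
    at hvj hβv ⊢
  rw [hvj, mul_zero, add_zero] at hβv ⊢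
  exact le_antisymm (mul_nonpos_of_nonpos_of_nonneg ha hαv) hβv

theorem IsAdjChamber.locArr_subset_of_coeff_eq_zero (hC : IsChamberOf A C)
    (hα : IsChamberBasis A C α) (hhyp : ∀ H ∈ A, IsLinHyperplane H) {i j : Fin ℓ} (hij : i ≠ j)
    {c : Fin ℓ → ℝ} (hC' : IsAdjChamber A C C' (ker (α i)))
    (hcB : IsChamberBasis A C' (fun k => α k - c k • α i)) (hc : c j = 0) :
    locArr A (ker (α i) ⊓ ker (α j)) ⊆ {ker (α i), ker (α j)} := by
  have hα0 := hα.ne_zero hhyp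
  intro H hHX
  obtain ⟨hH, hXH⟩ := Finset.mem_filter.mp hHX
  by_contra hHP
  obtain ⟨hHi, hHj⟩ : H ≠ ker (α i) ∧ H ≠ ker (α j) := by simpa [not_or] using hHP
  obtain ⟨f, hf0, rfl⟩ := hhyp H hH
  obtain ⟨β, hβf, hβC⟩ := hC.exists_ker_eq_pos hH
  rw [← hβf] at hH hXH hHi hHj
  have hβ0 : β ≠ 0 := by rintro rfl; exact hf0 (by simpa [eq_comm] using hβf)
  obtain ⟨a, b, hab⟩ := exists_smul_add_smul_eq_of_inf_ker_le hXH
  have ha : 0 < a := hα.pos_of_smul_add_smul_eq (hα0 j) hβC hβ0 hab hHj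
  have hβC' : ∀ v ∈ closure C', 0 ≤ β v := by
    refine fun v => β.nonneg_of_mem_closure (hC'.1.pos_of_pos_of_not_span_le hH hβC ?_)
    rw [hC'.2.2]
    exact fun hle => hHi (ker_eq_of_ker_le hβ0 hle).symm
  have hαC' : ∀ v ∈ closure C', 0 ≤ (-α i) v := fun v =>
    (-α i).nonneg_of_mem_closure fun u hu => by simpa using hC'.apply_neg hC hα hα0 u hu
  have hwall : Submodule.span ℝ ((ker (α j) : Set V) ∩ closure C') = ker (α j) := by
    simpa [hc] using (hcB.1 j).span_inter_closure_eq (by simpa [hc] using hα0 j)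
  refine hij (hα.2.2.1 (ker_eq_of_ker_le (hα0 i) ?_).symm)
  rw [← hwall, Submodule.span_le]
  rintro v ⟨hvj, hv⟩
  have hβv := hβC' v hv
  have hαv := hαC' v hv
  rw [← hab] at hβv
  simp only [SetLike.mem_coe, mem_ker, LinearMap.add_apply, LinearMap.smul_apply, smul_eq_mul,
    LinearMap.neg_apply] at hvj hβv hαv ⊢
  rw [hvj, mul_zero, add_zero] at hβv
  exact le_antisymm (by linarith) (nonneg_of_mul_nonneg_right hβv ha)

end ChamberSigns

theorem adjacent_coeffs_dichotomy_general (ℓ : ℕ)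
    (A : Finset (Submodule ℝ (Fin ℓ → ℝ)))
    (hhyp : ∀ H ∈ A, IsLinHyperplane H)
    (C : Set (Fin ℓ → ℝ)) (hC : IsChamberOf A C)
    (α : Fin ℓ → ((Fin ℓ → ℝ) →ₗ[ℝ] ℝ)) (hα : IsChamberBasis A C α)
    (i j : Fin ℓ) (hij : i ≠ j)
    (Ci : Set (Fin ℓ → ℝ)) (hCi : IsAdjChamber A C Ci (LinearMap.ker (α i)))
    (ci : Fin ℓ → ℝ) (hciB : IsChamberBasis A Ci (fun k => α k - ci k • α i))
    (Cj : Set (Fin ℓ → ℝ)) (hCj : IsAdjChamber A C Cj (LinearMap.ker (α j)))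
    (cj : Fin ℓ → ℝ) (hcjB : IsChamberBasis A Cj (fun k => α k - cj k • α j)) :
    ((ci j = 0 ∧ cj i = 0) ↔
        (locArr A (LinearMap.ker (α i) ⊓ LinearMap.ker (α j))).card = 2) ∧
      ((locArr A (LinearMap.ker (α i) ⊓ LinearMap.ker (α j))).card = 3 →
        cj i = 1 / ci j ∧ (ci j = -1 → cj i = -1)) := by
  have hα0 := hα.ne_zero hhyp
  have hker : ker (α i) ≠ ker (α j) := hα.2.2.1.ne hij
  have hind := linearIndependent_pair_of_ker_ne (hα0 i) (hα0 j) hker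
  have hind' := linearIndependent_pair_of_ker_ne (hα0 j) (hα0 i) hker.symm
  set P : Finset (Submodule ℝ (Fin ℓ → ℝ)) := {ker (α i), ker (α j)}
  set L := locArr A (ker (α i) ⊓ ker (α j))
  have hL : L = locArr A (ker (α j) ⊓ ker (α i)) := by rw [inf_comm]
  have hPL : P ⊆ L := by
    simp [P, L, locArr, Finset.insert_subset_iff, (hα.1 i).1, (hα.1 j).1]
  have hLPi : ci j = 0 → L ⊆ P := hCi.locArr_subset_of_coeff_eq_zero hC hα hhyp hij hciB
  have hLPj : cj i = 0 → L ⊆ P := by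
    rw [hL, show P = {ker (α j), ker (α i)} from Finset.pair_comm _ _]
    exact hCj.locArr_subset_of_coeff_eq_zero hC hα hhyp hij.symm hcjB
  have hγi : ker (α j - ci j • α i) ∈ L :=
    Finset.mem_filter.mpr ⟨(hciB.1 j).1, inf_ker_le_ker_sub_smul⟩
  have hγj : ker (α i - cj i • α j) ∈ L :=
    hL ▸ Finset.mem_filter.mpr ⟨(hcjB.1 i).1, inf_ker_le_ker_sub_smul⟩
  have hγiP : ker (α j - ci j • α i) ∈ P → ci j = 0 := fun h =>
    eq_zero_of_ker_sub_smul_eq_or hind (by simpa [P] using h)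
  have hγjP : ker (α i - cj i • α j) ∈ P → cj i = 0 := fun h =>
    eq_zero_of_ker_sub_smul_eq_or hind' (by simpa [P, or_comm] using h)
  have hcardP : P.card = 2 := Finset.card_pair hker
  refine ⟨⟨fun ⟨hci, _⟩ => ?_, fun h2 => ?_⟩, fun h3 => ?_⟩
  · rw [Finset.Subset.antisymm (hLPi hci) hPL, hcardP]
  · have hLP : P = L := Finset.eq_of_subset_of_card_le hPL (by rw [h2, hcardP])
    exact ⟨hγiP (hLP ▸ hγi), hγjP (hLP ▸ hγj)⟩
  · have hLP : ¬ L ⊆ P := fun h => by simpa [h3, hcardP] using Finset.card_le_card h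
    have hγ : ker (α j - ci j • α i) = ker (α i - cj i • α j) :=
      Finset.eq_of_mem_sdiff_pair_of_card_eq_three h3 hker hPL
        (Finset.mem_sdiff.mpr ⟨hγi, mt hγiP (mt hLPi hLP)⟩)
        (Finset.mem_sdiff.mpr ⟨hγj, mt hγjP (mt hLPj hLP)⟩)
    have hprod := mul_eq_one_of_ker_sub_smul_eq hind hγ
    refine ⟨eq_one_div_of_mul_eq_one_right hprod, fun hm => ?_⟩
    rw [hm] at hprod
    linarith

/-- For `i ≠ j`: `c^K_{ij} = c^K_{ji} = 0` iff `|A_{αᵢ^⊥ ∩ αⱼ^⊥}| = 2`; and if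
`|A_{αᵢ^⊥ ∩ αⱼ^⊥}| = 3`, then `c^K_{ji} = 1 / c^K_{ij}`, and in particular
`c^K_{ij} = -1` implies `c^K_{ji} = -1`. -/
theorem adjacent_coeffs_dichotomy (ℓ : ℕ)
    (A : Finset (Submodule ℝ (Fin ℓ → ℝ)))
    (hhyp : ∀ H ∈ A, IsLinHyperplane H) (hsimp : IsSimplicialArr A)
    (C : Set (Fin ℓ → ℝ)) (hC : IsChamberOf A C)
    (α : Fin ℓ → ((Fin ℓ → ℝ) →ₗ[ℝ] ℝ)) (hα : IsChamberBasis A C α)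
    (i j : Fin ℓ) (hij : i ≠ j)
    (Ci : Set (Fin ℓ → ℝ)) (hCi : IsAdjChamber A C Ci (LinearMap.ker (α i)))
    (ci : Fin ℓ → ℝ) (hciB : IsChamberBasis A Ci (fun k => α k - ci k • α i))
    (Cj : Set (Fin ℓ → ℝ)) (hCj : IsAdjChamber A C Cj (LinearMap.ker (α j)))
    (cj : Fin ℓ → ℝ) (hcjB : IsChamberBasis A Cj (fun k => α k - cj k • α j)) :
    ((ci j = 0 ∧ cj i = 0) ↔
        (locArr A (LinearMap.ker (α i) ⊓ LinearMap.ker (α j))).card = 2) ∧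
      ((locArr A (LinearMap.ker (α i) ⊓ LinearMap.ker (α j))).card = 3 →
        cj i = 1 / ci j ∧ (ci j = -1 → cj i = -1)) :=
  adjacent_coeffs_dichotomy_general ℓ A hhyp C hC α hα i j hij Ci hCi ci hciB Cj hCj cj hcjB
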